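/- Let K1 be the following set of 14 points of PG(2,31), given in homogeneous coordinates: (0,0,1), (0,1,0), (1,0,0), (1,1,1), (1,3,10), (1,5,11), (1,9,29), (1,12,19), (1,13,6), (1,14,3), (1,16,9), (1,20,26), (1,21,15), (1,22,16). Then K1 is a complete arc of PG(2,31) of size 14. -/

import Mathlib

open Projectivization

instance : Fact (Nat.Prime 31) := ⟨by norm_num⟩

/-- The point set of the projective plane `PG(2,31)`: the projectivization of the
3-dimensional vector space over the field with 31 elements. -/
abbrev PG31 : Type := Projectivization (ZMod 31) (Fin 3 → ZMod 31)

/-- An arc: a set of points no three of which are collinear, i.e. any three distinct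
points of the set have linearly independent representative vectors. -/
def IsArc31 (K : Set PG31) : Prop :=
  ∀ p ∈ K, ∀ q ∈ K, ∀ r ∈ K, p ≠ q → p ≠ r → q ≠ r →
    LinearIndependent (ZMod 31) ![p.rep, q.rep, r.rep]

/-- A complete arc: an arc not contained in a strictly larger arc. -/
def IsCompleteArc31 (K : Set PG31) : Prop :=
  IsArc31 K ∧ ∀ K' : Set PG31, IsArc31 K' → K ⊆ K' → K' = K

/-- The point of `PG(2,31)` with homogeneous coordinates `(a, b, c)`. -/
def pt31 (a b c : ZMod 31) (h : ![a, b, c] ≠ 0 := by decide) : PG31 :=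
  Projectivization.mk (ZMod 31) ![a, b, c] h

/-- The arc `K1` of `PG(2,31)`. -/
def K1 : Set PG31 :=
  {pt31 0 0 1, pt31 0 1 0, pt31 1 0 0, pt31 1 1 1, pt31 1 3 10, pt31 1 5 11,
   pt31 1 9 29, pt31 1 12 19, pt31 1 13 6, pt31 1 14 3, pt31 1 16 9,
   pt31 1 20 26, pt31 1 21 15, pt31 1 22 16}

/-! Collinearity of three points is the vanishing of the determinant of representative vectors,
which does not depend on the choice of representatives. So being an arc is a check of the 364
triples of `K1`. For completeness it suffices that every point, written in normal form (first
nonzero coordinate `1`), lies on one of the 91 secants of `K1`: an arc containing `K1` cannot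
contain a third point of a secant. -/

section Projective

variable {K V : Type*} [Field K] [AddCommGroup V] [Module K V]

theorem Projectivization.linearIndependent_rep_iff {v w u : V} (hv : v ≠ 0) (hw : w ≠ 0)
    (hu : u ≠ 0) :
    LinearIndependent K ![(mk K v hv).rep, (mk K w hw).rep, (mk K u hu).rep] ↔
      LinearIndependent K ![v, w, u] := by
  obtain ⟨a, ha⟩ := exists_smul_eq_mk_rep K v hv
  obtain ⟨b, hb⟩ := exists_smul_eq_mk_rep K w hw
  obtain ⟨c, hc⟩ := exists_smul_eq_mk_rep K u hu
  have hsmul : ![a • v, b • w, c • u] = ![a, b, c] • ![v, w, u] := by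
    ext i : 1
    fin_cases i <;> rfl
  rw [← ha, ← hb, ← hc, hsmul, LinearIndependent.units_smul_iff]

theorem det_of_fin_three_rows (v w u : Fin 3 → K) :
    (Matrix.of ![v, w, u]).det =
      v 0 * w 1 * u 2 - v 0 * w 2 * u 1 - v 1 * w 0 * u 2 + v 1 * w 2 * u 0 +
        v 2 * w 0 * u 1 - v 2 * w 1 * u 0 :=
  Matrix.det_fin_three _

theorem linearIndependent_fin_three_iff_det_ne_zero {v w u : Fin 3 → K} :
    LinearIndependent K ![v, w, u] ↔ (Matrix.of ![v, w, u]).det ≠ 0 := by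
  rw [← isUnit_iff_ne_zero, ← Matrix.isUnit_iff_isUnit_det]
  exact Matrix.linearIndependent_rows_iff_isUnit

theorem exists_smul_eq_normal_form {v : Fin 3 → K} (hv : v ≠ 0) :
    ∃ a : K, a ≠ 0 ∧
      ((∃ b c, a • v = ![1, b, c]) ∨ (∃ c, a • v = ![0, 1, c]) ∨ a • v = ![0, 0, 1]) := by
  by_cases h0 : v 0 = 0
  · by_cases h1 : v 1 = 0
    · have h2 : v 2 ≠ 0 := fun h2 => hv (by ext i; fin_cases i <;> assumption)
      refine ⟨(v 2)⁻¹, inv_ne_zero h2, Or.inr (Or.inr ?_)⟩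
      ext i; fin_cases i <;> simp [h0, h1, h2]
    · refine ⟨(v 1)⁻¹, inv_ne_zero h1, Or.inr (Or.inl ⟨(v 1)⁻¹ * v 2, ?_⟩)⟩
      ext i; fin_cases i <;> simp [h0, h1]
  · refine ⟨(v 0)⁻¹, inv_ne_zero h0, Or.inl ⟨(v 0)⁻¹ * v 1, (v 0)⁻¹ * v 2, ?_⟩⟩
    ext i; fin_cases i <;> simp [h0]

end Projective

theorem IsCompleteArc31.of_forall_mem_secant {K : Set PG31} (hK : IsArc31 K)
    (hsec : ∀ p : PG31, ∃ q ∈ K, ∃ r ∈ K, q ≠ r ∧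
      ¬LinearIndependent (ZMod 31) ![p.rep, q.rep, r.rep]) :
    IsCompleteArc31 K := by
  refine ⟨hK, fun K' hK' hKK' => (Set.Subset.antisymm · hKK') ?_⟩
  intro p hp
  obtain ⟨q, hq, r, hr, hqr, hdep⟩ := hsec p
  by_contra hpK
  have hpq : p ≠ q := fun h => hpK (h ▸ hq)
  have hpr : p ≠ r := fun h => hpK (h ▸ hr)
  exact hdep (hK' p hp q (hKK' hq) r (hKK' hr) hpq hpr hqr)

namespace K1

def vec : Fin 14 → Fin 3 → ZMod 31 :=
  ![![0, 0, 1], ![0, 1, 0], ![1, 0, 0], ![1, 1, 1], ![1, 3, 10], ![1, 5, 11], ![1, 9, 29],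
    ![1, 12, 19], ![1, 13, 6], ![1, 14, 3], ![1, 16, 9], ![1, 20, 26], ![1, 21, 15], ![1, 22, 16]]

theorem vec_ne_zero : ∀ i, vec i ≠ 0 := by decide

def point (i : Fin 14) : PG31 := mk (ZMod 31) (vec i) (vec_ne_zero i)

theorem eq_range_point : K1 = Set.range point := by
  ext p
  simp [K1, point, vec, pt31, Fin.exists_fin_succ, eq_comm]

theorem point_mem (i : Fin 14) : point i ∈ K1 := eq_range_point ▸ Set.mem_range_self i

theorem point_injective : Function.Injective point := by
  have hvec : ∀ i j, ∀ a : ZMod 31, a • vec j = vec i → i = j := by decide +kernel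
  intro i j h
  obtain ⟨a, ha⟩ := (mk_eq_mk_iff' _ _ _ _ _).1 h
  exact hvec i j a ha

theorem linearIndependent_point_rep_iff (v : Fin 3 → ZMod 31) (hv : v ≠ 0) (i j : Fin 14) :
    LinearIndependent (ZMod 31) ![(mk (ZMod 31) v hv).rep, (point i).rep, (point j).rep] ↔
      (Matrix.of ![v, vec i, vec j]).det ≠ 0 := by
  rw [point, point, linearIndependent_rep_iff, linearIndependent_fin_three_iff_det_ne_zero]

theorem det_ne_zero : ∀ i j k : Fin 14, i ≠ j → i ≠ k → j ≠ k →
    (Matrix.of ![vec i, vec j, vec k]).det ≠ 0 := by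
  simp only [det_of_fin_three_rows]
  decide +kernel

theorem isArc31 : IsArc31 K1 := by
  rw [IsArc31, eq_range_point]
  rintro _ ⟨i, rfl⟩ _ ⟨j, rfl⟩ _ ⟨k, rfl⟩ hij hik hjk
  exact (linearIndependent_point_rep_iff (vec i) (vec_ne_zero i) j k).2 <|
    det_ne_zero i j k (ne_of_apply_ne _ hij) (ne_of_apply_ne _ hik) (ne_of_apply_ne _ hjk)

def OnSecant (v : Fin 3 → ZMod 31) : Prop :=
  ∃ i j : Fin 14, i < j ∧ (Matrix.of ![v, vec i, vec j]).det = 0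

theorem OnSecant.of_smul {a : ZMod 31} (ha : a ≠ 0) {v : Fin 3 → ZMod 31}
    (h : OnSecant (a • v)) : OnSecant v := by
  obtain ⟨i, j, hij, hdet⟩ := h
  have hsmul : (Matrix.of ![a • v, vec i, vec j]).det =
      a * (Matrix.of ![v, vec i, vec j]).det := by
    simp only [det_of_fin_three_rows, Pi.smul_apply, smul_eq_mul]
    ring
  exact ⟨i, j, hij, (mul_eq_zero.1 (hsmul ▸ hdet)).resolve_left ha⟩

theorem onSecant_zero_zero_one : OnSecant ![0, 0, 1] := by
  simp only [OnSecant, det_of_fin_three_rows]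
  decide +kernel

theorem onSecant_zero_one (c : ZMod 31) : OnSecant ![0, 1, c] := by
  revert c
  simp only [OnSecant, det_of_fin_three_rows]
  decide +kernel

theorem onSecant_one (b c : ZMod 31) : OnSecant ![1, b, c] := by
  revert b c
  simp only [OnSecant, det_of_fin_three_rows]
  decide +kernel

theorem exists_mem_secant (p : PG31) : ∃ q ∈ K1, ∃ r ∈ K1, q ≠ r ∧
    ¬LinearIndependent (ZMod 31) ![p.rep, q.rep, r.rep] := by
  induction p using Projectivization.ind with | h v hv => ?_
  obtain ⟨a, ha, hnormal⟩ := exists_smul_eq_normal_form hv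
  have hsec : OnSecant v := by
    refine .of_smul ha ?_
    rcases hnormal with ⟨b, c, hbc⟩ | ⟨c, hc⟩ | h
    exacts [hbc ▸ onSecant_one b c, hc ▸ onSecant_zero_one c, h ▸ onSecant_zero_zero_one]
  obtain ⟨i, j, hij, hdet⟩ := hsec
  refine ⟨point i, point_mem i, point j, point_mem j, point_injective.ne hij.ne, ?_⟩
  rw [linearIndependent_point_rep_iff, not_not]
  exact hdet

end K1

/-- `K1` is a complete arc of `PG(2,31)` of size 14. -/
theorem K1_complete_arc_card_14 : IsCompleteArc31 K1 ∧ K1.ncard = 14 := by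
  refine ⟨.of_forall_mem_secant K1.isArc31 K1.exists_mem_secant, ?_⟩
  rw [K1.eq_range_point, Set.ncard_range_of_injective K1.point_injective, Nat.card_fin]
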